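/- arXiv:2001.01319 — 6 statements merged into one kernel-verified Lean document; each statement's English description precedes it below -/
import Mathlib

section
/- For any graph G, the orientation number o(G) equals the minimum cardinality of a family S of subgraphs of G such that the union of S is G and every member of S is a sidewalk (a graph in which every connected component contains at most one cycle). -/
def IsOrientation {V : Type*} (G : SimpleGraph V) (o : V → V → Prop) : Prop :=
  ∀ x y, G.Adj x y ↔ (o x y ∨ o y x)

/-- A sidewalk (pseudoforest): each connected component contains at most one
cycle, i.e. any two cycles within the same component have the same edges. -/
def IsSidewalk {V : Type*} (G : SimpleGraph V) : Prop :=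
  ∀ ⦃u v : V⦄ (c₁ : G.Walk u u) (c₂ : G.Walk v v),
    c₁.IsCycle → c₂.IsCycle → G.Reachable u v →
      {e | e ∈ c₁.edges} = {e | e ∈ c₂.edges}

/-!
An orientation with all outdegrees at most one is the same thing as a sidewalk.
If `o` is such an orientation and `c` a cycle, the edges of `c` all have their tail on `c` and
`c` has as many edges as vertices, so every vertex of `c` has its out-edge on `c`; as a vertex of
a cycle has only two neighbours there, `c` is a directed cycle. Following out-edges from any vertex
of the component of `c` then reaches every vertex of `c` and never leaves `c` once on it, so any two
cycles of one component have the same vertices, hence the same edges. Conversely, a sidewalk is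
oriented by turning a cycle of each component (or a root of an acyclic component) around itself
and sending every other vertex along a path to it: an edge oriented neither way would lie on a
walk avoiding it, hence on a cycle, hence on the chosen one.

The two cardinals then agree: a cover by `κ` sidewalks orients each edge as one sidewalk through it
does, and an orientation of outdegree at most `κ` splits into `κ` graphs of outdegree at most one
by labelling the out-edges of each vertex injectively.
-/

universe u

open SimpleGraph Relation Relator

theorem Relation.ReflTransGen.symm_of_transGen_self {α : Type*} {r : α → α → Prop}
    (hr : RightUnique r) {a b : α} (ha : TransGen r a a) (hab : ReflTransGen r a b) :
    ReflTransGen r b a := by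
  induction hab with
  | refl => rfl
  | @tail b c _ hbc ih =>
    rcases ih.cases_head with rfl | ⟨d, hbd, hda⟩
    · obtain ⟨d, had, hda⟩ := TransGen.head'_iff.mp ha
      exact hr had hbc ▸ hda
    · exact hr hbd hbc ▸ hda

theorem Set.InjOn.transGen_self {α : Type*} {r : α → α → Prop} {f : α → α} {s : Set α}
    (hf : Set.InjOn f s) (hs : s.Finite) (hmaps : Set.MapsTo f s s) (hr : ∀ x ∈ s, r x (f x))
    {a : α} (ha : a ∈ s) : TransGen r a a := by
  have : Finite s := hs.to_subtype
  obtain ⟨n, hn, hper⟩ := (hmaps.restrict_inj.mpr hf).mem_periodicPts ⟨a, ha⟩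
  have hiter : f^[n] a = a := by
    simpa [Function.IsPeriodicPt, Function.IsFixedPt, Set.MapsTo.iterate_restrict] using
      congrArg Subtype.val hper
  have key : ∀ m, TransGen r a (f^[m + 1] a) := by
    intro m
    induction m with
    | zero => exact .single (hr a ha)
    | succ m ih =>
      rw [Function.iterate_succ_apply']
      exact ih.tail (hr _ (hmaps.iterate _ ha))
  obtain ⟨m, rfl⟩ : ∃ m, n = m + 1 := ⟨n - 1, by omega⟩
  simpa only [hiter] using key m

section

variable {V : Type*} {G : SimpleGraph V} {o : V → V → Prop}

theorem IsOrientation.adj (ho : IsOrientation G o) {x y : V} (h : o x y) : G.Adj x y :=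
  (ho x y).2 (.inl h)

open Classical in
noncomputable def outNeighbor (o : V → V → Prop) (x : V) : V :=
  if h : ∃ y, o x y then h.choose else x

theorem outNeighbor_spec {x y : V} (h : o x y) : o x (outNeighbor o x) := by
  have h' : ∃ y, o x y := ⟨y, h⟩
  rw [outNeighbor, dif_pos h']
  exact h'.choose_spec

theorem Relator.RightUnique.outNeighbor_eq (hu : RightUnique o) {x y : V} (h : o x y) :
    outNeighbor o x = y :=
  hu (outNeighbor_spec h) h

theorem outNeighbor_spec_of_ne {x : V} (h : outNeighbor o x ≠ x) : o x (outNeighbor o x) := by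
  by_contra hx
  exact h (by rw [outNeighbor, dif_neg fun ⟨_, hy⟩ => hx (outNeighbor_spec hy)])

namespace IsOrientation

variable {u a : V} {c : G.Walk u u}

theorem bijOn_cycle (ho : IsOrientation G o) (hu : RightUnique o) (hc : c.IsCycle) :
    Set.BijOn (fun a => s(a, outNeighbor o a)) {a | a ∈ c.support} c.edgeSet := by
  classical
  have hsupp : {a | a ∈ c.support} = (c.support.tail.toFinset : Set V) := by
    ext a
    simp only [Set.mem_ofPred_eq, Finset.mem_coe, List.mem_toFinset, c.mem_support_iff,
      or_iff_right_iff_imp]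
    rintro rfl
    exact c.end_mem_tail_support hc.not_nil
  have hmem : ∀ a ∈ c.support, a ∈ c.support.tail.toFinset := fun a ha => by
    rw [← Finset.mem_coe, ← hsupp]; exact ha
  have hcard : c.support.tail.toFinset.card = c.edges.toFinset.card := by
    rw [List.toFinset_card_of_nodup hc.support_nodup, List.toFinset_card_of_nodup hc.edges_nodup,
      List.length_tail, Walk.length_support, Walk.length_edges, Nat.add_sub_cancel]
  rw [hsupp, ← Walk.coe_edges_toFinset]
  refine (Finset.image_eq_iff_bijOn_of_card hcard.le).mp <|
    Finset.eq_of_superset_of_card_ge (fun e he => ?_) (Finset.card_image_le.trans hcard.le)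
  rw [List.mem_toFinset] at he
  induction e using Sym2.ind with | _ x y
  rcases (ho x y).1 (c.adj_of_mem_edges he) with h | h
  · exact Finset.mem_image.mpr
      ⟨x, hmem x (c.fst_mem_support_of_mem_edges he), by rw [hu.outNeighbor_eq h]⟩
  · exact Finset.mem_image.mpr
      ⟨y, hmem y (c.snd_mem_support_of_mem_edges he), by
        rw [hu.outNeighbor_eq h, Sym2.eq_swap]⟩

theorem outNeighbor_mem_cycle (ho : IsOrientation G o) (hu : RightUnique o) (hc : c.IsCycle)
    (ha : a ∈ c.support) : outNeighbor o a ∈ c.support :=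
  c.snd_mem_support_of_mem_edges ((ho.bijOn_cycle hu hc).mapsTo ha)

theorem rel_outNeighbor_of_mem_cycle (ho : IsOrientation G o) (hu : RightUnique o)
    (hc : c.IsCycle) (ha : a ∈ c.support) : o a (outNeighbor o a) :=
  outNeighbor_spec_of_ne (c.adj_of_mem_edges ((ho.bijOn_cycle hu hc).mapsTo ha)).ne.symm

theorem injOn_outNeighbor_cycle (ho : IsOrientation G o) (hu : RightUnique o) (hc : c.IsCycle) :
    Set.InjOn (outNeighbor o) {a | a ∈ c.support} := by
  intro a ha b hb hab
  by_contra hne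
  -- otherwise `z` has the three neighbours `a`, `b` and `outNeighbor o z` on `c`
  have hbij := ho.bijOn_cycle hu hc
  set z := outNeighbor o a
  have hz : z ∈ c.support := ho.outNeighbor_mem_cycle hu hc ha
  have hne_out : ∀ p ∈ c.support, outNeighbor o p = z → p ≠ outNeighbor o z := by
    rintro p hp hpz rfl
    have hzp : z = outNeighbor o z := hbij.injOn hz hp (by simp only [hpz, Sym2.eq_swap])
    exact (c.adj_of_mem_edges (hbij.mapsTo hz)).ne hzp
  have hadj : ∀ p ∈ c.support, outNeighbor o p = z → c.toSubgraph.Adj z p := by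
    intro p hp hpz
    rw [Walk.adj_toSubgraph_iff_mem_edges, Sym2.eq_swap, ← hpz]
    exact hbij.mapsTo hp
  have hsub : {a, b, outNeighbor o z} ⊆ c.toSubgraph.neighborSet z := by
    simp only [Set.insert_subset_iff, Set.singleton_subset_iff, Subgraph.mem_neighborSet]
    exact ⟨hadj a ha rfl, hadj b hb hab.symm,
      Walk.adj_toSubgraph_iff_mem_edges.mpr (hbij.mapsTo hz)⟩
  have := Set.ncard_le_ncard hsub c.finite_neighborSet_toSubgraph
  rw [hc.ncard_neighborSet_toSubgraph_eq_two hz, Set.ncard_eq_three.mpr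
    ⟨_, _, _, hne, hne_out a ha rfl, hne_out b hb hab.symm, rfl⟩] at this
  omega

theorem transGen_self_of_mem_cycle (ho : IsOrientation G o) (hu : RightUnique o)
    (hc : c.IsCycle) (ha : a ∈ c.support) : TransGen o a a :=
  (ho.injOn_outNeighbor_cycle hu hc).transGen_self c.support.finite_toSet
    (fun _ => ho.outNeighbor_mem_cycle hu hc) (fun _ => ho.rel_outNeighbor_of_mem_cycle hu hc) ha

theorem mem_cycle_of_reflTransGen (ho : IsOrientation G o) (hu : RightUnique o) (hc : c.IsCycle)
    {b : V} (ha : a ∈ c.support) (hab : ReflTransGen o a b) : b ∈ c.support := by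
  induction hab with
  | refl => exact ha
  | tail _ h ih => exact hu.outNeighbor_eq h ▸ ho.outNeighbor_mem_cycle hu hc ih

theorem reflTransGen_of_reachable (ho : IsOrientation G o) (hu : RightUnique o) {x b : V}
    (hb : TransGen o b b) (hxb : G.Reachable x b) : ReflTransGen o x b := by
  obtain ⟨p⟩ := hxb
  induction p with
  | nil => rfl
  | @cons x m _ hxm _ ih =>
    rcases (ho x m).1 hxm with h | h
    · exact .head h (ih hb)
    · rcases (ih hb).cases_head with rfl | ⟨d, hmd, hdb⟩
      · exact (ReflTransGen.single h).symm_of_transGen_self hu hb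
      · exact hu hmd h ▸ hdb

theorem mem_cycle_of_reachable (ho : IsOrientation G o) (hu : RightUnique o) (hc : c.IsCycle)
    {v : V} {c' : G.Walk v v} (hc' : c'.IsCycle) (huv : G.Reachable u v) (ha : a ∈ c'.support) :
    a ∈ c.support := by
  classical
  exact ho.mem_cycle_of_reflTransGen hu hc c.start_mem_support <|
    ho.reflTransGen_of_reachable hu (ho.transGen_self_of_mem_cycle hu hc' ha)
      (huv.trans (c'.takeUntil a ha).reachable)

theorem isSidewalk (ho : IsOrientation G o) (hu : RightUnique o) : IsSidewalk G := by
  intro u v c₁ c₂ hc₁ hc₂ huv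
  have hsupp : {a | a ∈ c₁.support} = {a | a ∈ c₂.support} :=
    Set.ext fun _ => ⟨ho.mem_cycle_of_reachable hu hc₂ hc₁ huv.symm,
      ho.mem_cycle_of_reachable hu hc₁ hc₂ huv⟩
  change c₁.edgeSet = c₂.edgeSet
  rw [← (ho.bijOn_cycle hu hc₁).image_eq, ← (ho.bijOn_cycle hu hc₂).image_eq, hsupp]

end IsOrientation

theorem exists_isCycle_of_not_isBridge {x y : V} (hxy : G.Adj x y) (hb : ¬G.IsBridge s(x, y)) :
    ∃ (w : V) (c : G.Walk w w), c.IsCycle ∧ s(x, y) ∈ c.edges ∧ G.Reachable x w := by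
  classical
  obtain ⟨w, c, hc, he⟩ : ∃ (w : V) (c : G.Walk w w), c.IsCycle ∧ s(x, y) ∈ c.edges := by
    simpa [isBridge_iff_forall_cycle_notMem (G.mem_edgeSet.mpr hxy)] using hb
  exact ⟨w, c, hc, he, (c.dropUntil x (c.fst_mem_support_of_mem_edges he)).reachable⟩

theorem IsSidewalk.exists_closedWalk_containing_nonbridges (hG : IsSidewalk G)
    (K : G.ConnectedComponent) :
    ∃ u, G.connectedComponentMk u = K ∧ ∃ c : G.Walk u u, c.support.tail.Nodup ∧
      ∀ x y, G.Adj x y → ¬G.IsBridge s(x, y) → G.connectedComponentMk x = K →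
        s(x, y) ∈ c.edges := by
  by_cases h : ∃ u, G.connectedComponentMk u = K ∧ ∃ c : G.Walk u u, c.IsCycle
  · obtain ⟨u, hu, c, hc⟩ := h
    refine ⟨u, hu, c, hc.support_nodup, fun x y hxy hb hx => ?_⟩
    obtain ⟨w, c', hc', he, hxw⟩ := exists_isCycle_of_not_isBridge hxy hb
    have hwu : G.Reachable w u := hxw.symm.trans (ConnectedComponent.exact (hx.trans hu.symm))
    exact (Set.ext_iff.mp (hG c' c hc' hc hwu) _).mp he
  · induction K using ConnectedComponent.ind with | h v
    refine ⟨v, rfl, .nil, List.nodup_nil, fun x y hxy hb hx => ?_⟩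
    obtain ⟨w, c', hc', -, hxw⟩ := exists_isCycle_of_not_isBridge hxy hb
    exact absurd ⟨w, (ConnectedComponent.sound hxw).symm.trans hx, c', hc'⟩ h

section TowardRoots

variable {T : Set V} {r : V → V → Prop} {t : V → V} {p : ∀ x, G.Walk x (t x)}

def orientTowardRoots (T : Set V) (r : V → V → Prop) (p : ∀ x, G.Walk x (t x)) (x y : V) :
    Prop :=
  x ∈ T ∧ r x y ∨ x ∉ T ∧ (p x).snd = y

theorem rightUnique_orientTowardRoots (hr : RightUnique r) :
    RightUnique (orientTowardRoots T r p) := by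
  rintro x y z (⟨hx, hy⟩ | ⟨hx, rfl⟩) (⟨hx', hz⟩ | ⟨hx', rfl⟩)
  exacts [hr hy hz, absurd hx hx', absurd hx' hx, rfl]

theorem isOrientation_orientTowardRoots (ht : ∀ x, t x ∈ T) (hp : ∀ x, (p x).IsPath)
    (hpT : ∀ x ∈ T, (p x).edges = []) (hr : ∀ x y, r x y → x ∈ T ∧ G.Adj x y)
    (hTr : ∀ a ∈ T, ∀ b ∈ T, G.Reachable a b →
      ∃ q : G.Walk a b, ∀ x y, s(x, y) ∈ q.edges → r x y ∨ r y x)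
    (hbridge : ∀ x y, G.Adj x y → ¬G.IsBridge s(x, y) → r x y ∨ r y x) :
    IsOrientation G (orientTowardRoots T r p) := by
  have hro : ∀ {x y}, r x y → orientTowardRoots T r p x y := fun h => .inl ⟨(hr _ _ h).1, h⟩
  have hpo : ∀ {x y}, s(x, y) ∈ (p x).edges → orientTowardRoots T r p x y := fun {x y} h =>
    .inr ⟨fun hx => by simp [hpT x hx] at h, ((hp x).eq_snd_of_mem_edges h).symm⟩
  have hadj : ∀ {x y}, orientTowardRoots T r p x y → G.Adj x y := by
    rintro x y (⟨-, h⟩ | ⟨hx, rfl⟩)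
    exacts [(hr x y h).2, (p x).adj_snd (Walk.not_nil_of_ne fun hxt => hx (hxt ▸ ht x))]
  refine fun x y => ⟨fun hxy => ?_, fun h => h.elim hadj fun h => (hadj h).symm⟩
  by_cases hb : G.IsBridge s(x, y)
  · by_contra hno
    simp only [not_or] at hno
    obtain ⟨q, hq⟩ := hTr _ (ht x) _ (ht y)
      ((p x).reachable.symm.trans (hxy.reachable.trans (p y).reachable))
    have hmem := isBridge_iff_forall_walk_mem_edges.mp hb ((p x).append (q.append (p y).reverse))
    simp only [Walk.edges_append, Walk.edges_reverse, List.mem_append, List.mem_reverse] at hmem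
    rcases hmem with h | h | h
    · exact hno.1 (hpo h)
    · exact (hq x y h).elim (fun h => hno.1 (hro h)) (fun h => hno.2 (hro h))
    · exact hno.2 (hpo (Sym2.eq_swap ▸ h))
  · exact (hbridge x y hxy hb).imp hro hro

end TowardRoots

theorem exists_orientation_toward_roots (T : Set V) (r : V → V → Prop)
    (hT : ∀ x, ∃ t ∈ T, G.Reachable x t) (hr : ∀ x y, r x y → x ∈ T ∧ G.Adj x y)
    (hru : RightUnique r)
    (hTr : ∀ a ∈ T, ∀ b ∈ T, G.Reachable a b →
      ∃ q : G.Walk a b, ∀ x y, s(x, y) ∈ q.edges → r x y ∨ r y x)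
    (hbridge : ∀ x y, G.Adj x y → ¬G.IsBridge s(x, y) → r x y ∨ r y x) :
    ∃ o, IsOrientation G o ∧ RightUnique o := by
  have hpath : ∀ x, ∃ t ∈ T, ∃ p : G.Walk x t, p.IsPath ∧ (x ∈ T → p.edges = []) := by
    intro x
    by_cases hx : x ∈ T
    · exact ⟨x, hx, .nil, .nil, fun _ => rfl⟩
    · classical
      obtain ⟨t, ht, ⟨p⟩⟩ := hT x
      exact ⟨t, ht, p.bypass, p.bypass_isPath, fun h => absurd h hx⟩
  choose t ht p hp hpT using hpath
  exact ⟨_, isOrientation_orientTowardRoots ht hp hpT hr hTr hbridge,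
    rightUnique_orientTowardRoots hru⟩

theorem IsSidewalk.exists_orientation (hG : IsSidewalk G) :
    ∃ o, IsOrientation G o ∧ RightUnique o := by
  classical
  choose u hu c hnodup hcyc using hG.exists_closedWalk_containing_nonbridges
  have hcomp : ∀ {K x}, x ∈ (c K).support → G.connectedComponentMk x = K := fun {K x} hx =>
    (ConnectedComponent.sound ((c K).dropUntil x hx).reachable).trans (hu K)
  -- darts are reversed because the `snd`s of the darts of a cycle are distinct
  let r x y := ∃ K, ∃ d ∈ (c K).darts, d.snd = x ∧ d.fst = y
  have horient : ∀ {K x y}, s(x, y) ∈ (c K).edges → r x y ∨ r y x := fun {K x y} h => by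
    obtain ⟨d, hd, hdxy⟩ := List.mem_map.mp h
    rcases Sym2.eq_iff.mp hdxy with ⟨h₁, h₂⟩ | ⟨h₁, h₂⟩
    · exact .inr ⟨K, d, hd, h₂, h₁⟩
    · exact .inl ⟨K, d, hd, h₂, h₁⟩
  refine exists_orientation_toward_roots {x | ∃ K, x ∈ (c K).support} r
    (fun x => ⟨u _, ⟨_, (c _).start_mem_support⟩, ConnectedComponent.exact (hu _).symm⟩)
    ?_ ?_ ?_ (fun x y hxy hb => horient (hcyc _ x y hxy hb rfl))
  · rintro x y ⟨K, d, hd, rfl, rfl⟩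
    exact ⟨⟨K, (c K).dart_snd_mem_support_of_mem_darts hd⟩, d.adj.symm⟩
  · rintro x y z ⟨K, d, hd, rfl, rfl⟩ ⟨K', d', hd', hsnd, rfl⟩
    obtain rfl : K = K' :=
      (hsnd ▸ hcomp ((c K).dart_snd_mem_support_of_mem_darts hd)).symm.trans
        (hcomp ((c K').dart_snd_mem_support_of_mem_darts hd'))
    have hnd : ((c K).darts.map (·.snd)).Nodup := by
      rw [Walk.map_snd_darts]; exact hnodup K
    rw [List.inj_on_of_nodup_map hnd hd hd' hsnd.symm]
  · rintro a ⟨K, ha⟩ b ⟨K', hb⟩ hab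
    obtain rfl : K = K' :=
      (hcomp ha).symm.trans ((ConnectedComponent.sound hab).trans (hcomp hb))
    refine ⟨((c K).dropUntil a ha).append ((c K).takeUntil b hb),
      fun x y hxy => horient (K := K) ?_⟩
    rw [Walk.edges_append, List.mem_append] at hxy
    exact hxy.elim (fun h => (c K).edges_dropUntil_subset_edges ha h)
      (fun h => (c K).edges_takeUntil_subset_edges hb h)

theorem isSidewalk_iff_exists_orientation :
    IsSidewalk G ↔ ∃ o, IsOrientation G o ∧ RightUnique o :=
  ⟨IsSidewalk.exists_orientation, fun ⟨_, ho, hu⟩ => ho.isSidewalk hu⟩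

theorem isOrientation_fromRel {r : V → V → Prop} (hr : ∀ x y, r x y → x ≠ y) :
    IsOrientation (fromRel r) r := fun x y => by
  rw [fromRel_adj]
  exact ⟨fun h => h.2, fun h => ⟨h.elim (hr x y) fun h => (hr y x h).symm, h⟩⟩

end

theorem exists_orientation_of_sidewalk_cover {V : Type u} {G : SimpleGraph V}
    {S : Set (SimpleGraph V)} (hS : ∀ H ∈ S, IsSidewalk H) (hSG : sSup S = G) :
    ∃ o, IsOrientation G o ∧ ∀ x, Cardinal.mk {y // o x y} ≤ Cardinal.mk S := by
  choose! oH hoH huH using fun H hH => isSidewalk_iff_exists_orientation.mp (hS H hH)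
  have hcover : ∀ e ∈ G.edgeSet, ∃ H ∈ S, e ∈ H.edgeSet := fun e he => by
    simpa [← hSG, edgeSet_sSup] using he
  choose! F hFS hF using hcover
  refine ⟨fun x y => G.Adj x y ∧ oH (F s(x, y)) x y, fun x y => ⟨fun hxy => ?_, ?_⟩,
    fun x => ?_⟩
  · rcases (hoH _ (hFS _ hxy) x y).1 (hF s(x, y) hxy) with h | h
    · exact .inl ⟨hxy, h⟩
    · exact .inr ⟨hxy.symm, Sym2.eq_swap ▸ h⟩
  · rintro (⟨h, -⟩ | ⟨h, -⟩)
    exacts [h, h.symm]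
  · refine Cardinal.mk_le_of_injective (f := fun y => ⟨F s(x, y.1), hFS _ y.2.1⟩) ?_
    rintro ⟨y₁, h₁, ho₁⟩ ⟨y₂, h₂, ho₂⟩ hF₁₂
    have hF : F s(x, y₁) = F s(x, y₂) := congrArg Subtype.val hF₁₂
    exact Subtype.ext (huH _ (hFS _ h₂) (hF ▸ ho₁) ho₂)

theorem exists_sidewalk_cover_of_orientation {V : Type u} {G : SimpleGraph V}
    {o : V → V → Prop} (ho : IsOrientation G o) {κ : Cardinal.{u}}
    (hκ : ∀ x, Cardinal.mk {y // o x y} ≤ κ) :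
    ∃ S : Set (SimpleGraph V), (∀ H ∈ S, H ≤ G ∧ IsSidewalk H) ∧ sSup S = G ∧
      Cardinal.mk S ≤ κ := by
  have hemb : ∀ x, Nonempty ({y // o x y} ↪ κ.out) := fun x => by
    rw [← Cardinal.le_def, Cardinal.mk_out]
    exact hκ x
  let g x := (hemb x).some
  let label (i : κ.out) (x y : V) : Prop := ∃ h : o x y, g x ⟨y, h⟩ = i
  have hle : ∀ i, fromRel (label i) ≤ G := fun i x y h => by
    rw [fromRel_adj] at h
    rcases h.2 with ⟨h, -⟩ | ⟨h, -⟩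
    exacts [ho.adj h, (ho.adj h).symm]
  refine ⟨Set.range fun i => fromRel (label i), ?_, ?_, Cardinal.mk_range_le.trans_eq κ.mk_out⟩
  · rintro _ ⟨i, rfl⟩
    refine ⟨hle i, (isOrientation_fromRel fun x y h => (ho.adj h.1).ne).isSidewalk ?_⟩
    rintro x y z ⟨hy, hgy⟩ ⟨hz, hgz⟩
    exact congrArg Subtype.val ((g x).injective (hgy.trans hgz.symm))
  · refine le_antisymm (sSup_le ?_) fun x y hxy => sSup_adj.mpr ?_
    · rintro _ ⟨i, rfl⟩
      exact hle i
    · rcases (ho x y).1 hxy with h | h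
      · exact ⟨_, ⟨g x ⟨y, h⟩, rfl⟩, (fromRel_adj ..).mpr ⟨hxy.ne, .inl ⟨h, rfl⟩⟩⟩
      · exact ⟨_, ⟨g y ⟨x, h⟩, rfl⟩, (fromRel_adj ..).mpr ⟨hxy.ne, .inr ⟨h, rfl⟩⟩⟩

/-- The orientation number of `G` equals the minimum cardinality of a family of
sidewalk subgraphs of `G` whose union is `G`. -/
theorem orientation_number_eq_sidewalk_cover {V : Type u} (G : SimpleGraph V) :
    sInf {c : Cardinal.{u} | ∃ o : V → V → Prop, IsOrientation G o ∧
        ∀ x, Cardinal.mk {y // o x y} ≤ c}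
      = sInf {c : Cardinal.{u} | ∃ S : Set (SimpleGraph V),
          (∀ H ∈ S, H ≤ G ∧ IsSidewalk H) ∧ sSup S = G ∧ Cardinal.mk S = c} := by
  have hadj : IsOrientation G G.Adj := fun x y => (or_iff_left_of_imp fun h => h.symm).symm
  apply le_antisymm
  · obtain ⟨S, hS, hSG, -⟩ := exists_sidewalk_cover_of_orientation hadj
      fun x => Cardinal.mk_subtype_le (G.Adj x)
    refine le_csInf ⟨_, S, hS, hSG, rfl⟩ ?_
    rintro _ ⟨S, hS, hSG, rfl⟩
    obtain ⟨o, ho, hdeg⟩ := exists_orientation_of_sidewalk_cover (fun H hH => (hS H hH).2) hSG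
    exact csInf_le' ⟨o, ho, hdeg⟩
  · refine le_csInf ⟨_, G.Adj, hadj, fun x => Cardinal.mk_subtype_le _⟩ ?_
    rintro κ ⟨o, ho, hdeg⟩
    obtain ⟨S, hS, hSG, hcard⟩ := exists_sidewalk_cover_of_orientation ho hdeg
    exact le_trans (csInf_le' ⟨S, hS, hSG, rfl⟩) hcard
end

section
/- A graph G admits an orientation with all outdegrees at most 1 if and only if G is a sidewalk, i.e., every connected component of G contains at most one cycle. -/
/-!
An orientation with outdegrees at most one is the same as a map `f : V → V` such that every edge
is `s(x, f x)` for one of its endpoints, i.e. `G ≤ fromRel (f · = ·)`.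

Given such an `f`, a cycle has as many edges as vertices and each of its edges is `s(x, f x)` for
one of its vertices, so `f` permutes the vertices of the cycle and its edges are exactly the
`s(x, f x)`. Following `f` from any vertex of the component leads into every cycle of it; since the
vertices of another cycle are `f`-periodic, they already lie on the first one. So two cycles in a
component share their vertices, hence their edges.

Conversely, take a spanning forest `H` of a sidewalk `G`. A component contains at most one edge of
`G` outside `H`: two such edges `e ≠ e'` close cycles with `H`, and only the first one contains
`e`. Root each tree at an endpoint `r` of its extra edge `s(r, s)` (if there is one), let `f`
point towards the root and set `f r = s`.
-/

open SimpleGraph Set Function Finset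

lemma Set.Finite.mem_periodicPts_of_injOn {α : Type*} {f : α → α} {s : Set α} (hs : s.Finite)
    (hmaps : MapsTo f s s) (hinj : InjOn f s) {x : α} (hx : x ∈ s) : x ∈ periodicPts f := by
  have := hs.to_subtype
  obtain ⟨n, hn, hper⟩ :=
    mem_periodicPts.1 ((hmaps.restrict_inj.2 hinj).mem_periodicPts ⟨x, hx⟩)
  refine mk_mem_periodicPts hn ?_
  simpa [IsPeriodicPt, IsFixedPt, hmaps.iterate_restrict, Subtype.ext_iff] using hper

lemma Set.MapsTo.mem_of_mem_periodicPts {α : Type*} {f : α → α} {s : Set α}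
    (hs : MapsTo f s s) {x : α} (hx : x ∈ periodicPts f) {n : ℕ} (hn : f^[n] x ∈ s) :
    x ∈ s := by
  obtain ⟨m, hm, hper⟩ := mem_periodicPts.1 hx
  have hmn : m * n - n + n = m * n := Nat.sub_add_cancel (Nat.le_mul_of_pos_left n hm)
  rw [← (hper.mul_const n).eq, ← hmn, iterate_add_apply]
  exact hs.iterate _ hn

namespace SimpleGraph

variable {V : Type*} {G : SimpleGraph V} {f : V → V}

lemma Walk.mem_support_tail_iff_of_not_nil {u x : V} {c : G.Walk u u} (hc : ¬ c.Nil) :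
    x ∈ c.support.tail ↔ x ∈ c.support := by
  rw [c.mem_support_iff, or_iff_right_of_imp]
  rintro rfl
  exact c.end_mem_tail_support hc

lemma Reachable.exists_iterate_mem_of_le_fromRel (hf : G ≤ fromRel (f · = ·)) {s : Set V}
    (hs : MapsTo f s s) {a b : V} (hab : G.Reachable a b) (ha : ∃ n, f^[n] a ∈ s) :
    ∃ n, f^[n] b ∈ s := by
  obtain ⟨p⟩ := hab
  induction p with
  | nil => exact ha
  | @cons a b _ hadj _ ih =>
    refine ih ?_
    obtain ⟨n, hn⟩ := ha
    rcases (hf hadj).2 with rfl | rfl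
    · exact ⟨n, by rw [← iterate_succ_apply, iterate_succ_apply']; exact hs hn⟩
    · exact ⟨n + 1, by rwa [iterate_succ_apply]⟩

namespace Walk.IsCycle

variable {u : V} {c : G.Walk u u}

lemma bijOn_mk_apply (hf : G ≤ fromRel (f · = ·)) (hc : c.IsCycle) :
    BijOn (fun x ↦ s(x, f x)) {x | x ∈ c.support} {e | e ∈ c.edges} := by
  classical
  have hsupp : {x | x ∈ c.support} = (c.support.tail.toFinset : Set V) := by
    ext
    simp [mem_support_tail_iff_of_not_nil hc.not_nil]
  have hedges : {e | e ∈ c.edges} = (c.edges.toFinset : Set (Sym2 V)) := by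
    ext
    simp
  have hcard : #c.edges.toFinset = #c.support.tail.toFinset := by
    rw [List.toFinset_card_of_nodup hc.edges_nodup,
      List.toFinset_card_of_nodup hc.support_nodup]
    simp
  have hsub : c.edges.toFinset ⊆ c.support.tail.toFinset.image (fun x ↦ s(x, f x)) := by
    intro e he
    rw [List.mem_toFinset] at he
    induction e with
    | _ a b =>
    simp only [Finset.mem_image, List.mem_toFinset, mem_support_tail_iff_of_not_nil hc.not_nil]
    rcases (hf (c.adj_of_mem_edges he)).2 with rfl | rfl
    · exact ⟨a, c.fst_mem_support_of_mem_edges he, rfl⟩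
    · exact ⟨b, c.snd_mem_support_of_mem_edges he, Sym2.eq_swap⟩
  -- `n` edges, each of the form `s(x, f x)` for one of the `n` vertices
  have himage := Finset.eq_of_subset_of_card_le hsub (Finset.card_image_le.trans hcard.ge)
  rw [hsupp, hedges, himage, Finset.coe_image]
  exact (Finset.injOn_of_card_image_eq (by rw [← himage, hcard])).bijOn_image

lemma mk_apply_mem_edges (hf : G ≤ fromRel (f · = ·)) (hc : c.IsCycle) {x : V}
    (hx : x ∈ c.support) : s(x, f x) ∈ c.edges :=
  (hc.bijOn_mk_apply hf).mapsTo hx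

lemma mapsTo (hf : G ≤ fromRel (f · = ·)) (hc : c.IsCycle) :
    MapsTo f {x | x ∈ c.support} {x | x ∈ c.support} := fun _ hx ↦
  c.snd_mem_support_of_mem_edges (hc.mk_apply_mem_edges hf hx)

lemma injOn (hf : G ≤ fromRel (f · = ·)) (hc : c.IsCycle) :
    InjOn f {x | x ∈ c.support} := by
  intro x hx y hy hxy
  by_contra hne
  -- otherwise `x`, `y` and `f z` would be three neighbours of `z := f x` on the cycle
  set z := f x
  have hz : z ∈ c.support := hc.mapsTo hf hx
  have hadj : ∀ w ∈ c.support, c.toSubgraph.Adj w (f w) := fun w hw ↦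
    adj_toSubgraph_iff_mem_edges.2 (hc.mk_apply_mem_edges hf hw)
  have hne_fz : ∀ w ∈ c.support, f w = z → w ≠ f z := by
    intro w hw hwz hwfz
    have hwz' : w = z :=
      (hc.bijOn_mk_apply hf).injOn hw hz (by simp only [hwz, ← hwfz, Sym2.eq_swap])
    exact (hadj w hw).ne (hwz'.trans hwz.symm)
  obtain ⟨a, b, -, hab⟩ := Set.ncard_eq_two.1 (hc.ncard_neighborSet_toSubgraph_eq_two hz)
  have hx' : x ∈ c.toSubgraph.neighborSet z := (hadj x hx).symm
  have hy' : y ∈ c.toSubgraph.neighborSet z := hxy ▸ (hadj y hy).symm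
  have hfz : f z ∈ c.toSubgraph.neighborSet z := hadj z hz
  rw [hab] at hx' hy' hfz
  have := hne_fz x hx rfl
  have := hne_fz y hy hxy.symm
  grind

lemma support_subset_of_reachable (hf : G ≤ fromRel (f · = ·)) {v : V} {c' : G.Walk v v}
    (hc : c.IsCycle) (hc' : c'.IsCycle) (huv : G.Reachable u v) {x : V} (hx : x ∈ c'.support) :
    x ∈ c.support := by
  classical
  have hper : x ∈ periodicPts f :=
    c'.support.finite_toSet.mem_periodicPts_of_injOn (hc'.mapsTo hf) (hc'.injOn hf) hx
  obtain ⟨n, hn⟩ := (huv.trans ⟨c'.takeUntil x hx⟩).exists_iterate_mem_of_le_fromRel hf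
    (hc.mapsTo hf) ⟨0, c.start_mem_support⟩
  exact (hc.mapsTo hf).mem_of_mem_periodicPts hper hn

end Walk.IsCycle

theorem isSidewalk_of_le_fromRel (hf : G ≤ fromRel (f · = ·)) : IsSidewalk G := by
  intro u v c₁ c₂ h₁ h₂ huv
  have hsupp : {x | x ∈ c₁.support} = {x | x ∈ c₂.support} :=
    Subset.antisymm (fun _ hx ↦ h₂.support_subset_of_reachable hf h₁ huv.symm hx)
      (fun _ hx ↦ h₁.support_subset_of_reachable hf h₂ huv hx)
  rw [← (h₁.bijOn_mk_apply hf).image_eq, ← (h₂.bijOn_mk_apply hf).image_eq, hsupp]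

open Classical in
/-- Meaningful for acyclic `H`, where the path from `x` to `r` is unique; equals `x` when `x = r`
or when `r` is not reachable from `x`. -/
noncomputable def towards (H : SimpleGraph V) (r x : V) : V :=
  if h : H.Reachable x r then (h.some.toPath : H.Walk x r).snd else x

section Forest

variable {H : SimpleGraph V}

lemma IsAcyclic.towards_eq_snd (hH : H.IsAcyclic) {r x : V} {p : H.Walk x r} (hp : p.IsPath) :
    towards H r x = p.snd := by
  have h : H.Reachable x r := ⟨p⟩
  rw [towards, dif_pos h]
  exact congrArg (fun q : H.Path x r ↦ (q : H.Walk x r).snd)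
    ((hH.subsingleton_path x r).allEq _ ⟨p, hp⟩)

lemma IsAcyclic.towards_self (hH : H.IsAcyclic) (r : V) : towards H r r = r :=
  hH.towards_eq_snd Walk.IsPath.nil

lemma IsAcyclic.towards_eq_or_towards_eq (hH : H.IsAcyclic) {r x y : V} (hxy : H.Adj x y)
    (hxr : H.Reachable x r) : towards H r x = y ∨ towards H r y = x := by
  classical
  obtain ⟨p, hp⟩ := hxr.some.toPath
  by_cases hy : y ∈ p.support
  · left
    have hedge : p.takeUntil y hy = Walk.cons hxy Walk.nil :=
      congrArg Subtype.val
        ((hH.subsingleton_path x y).allEq ⟨_, hp.takeUntil hy⟩ (Path.singleton hxy))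
    rw [hH.towards_eq_snd hp, ← Walk.snd_takeUntil hxy.ne.symm p hy, hedge, Walk.snd_cons]
  · right
    rw [hH.towards_eq_snd (hp.cons hy : (Walk.cons hxy.symm p).IsPath), Walk.snd_cons]

lemma IsAcyclic.update_towards_eq_or [DecidableEq V] (hH : H.IsAcyclic) {r x y : V}
    (hxy : H.Adj x y) (hxr : H.Reachable x r) (s : V) :
    update (towards H r) r s x = y ∨ update (towards H r) r s y = x := by
  have hroot : ∀ {a b}, towards H r a = b → a ≠ b → a ≠ r := by
    rintro a b hab hne rfl
    exact hne (hH.towards_self a ▸ hab)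
  rcases hH.towards_eq_or_towards_eq hxy hxr with h | h
  · exact .inl (by rw [update_of_ne (hroot h hxy.ne), h])
  · exact .inr (by rw [update_of_ne (hroot h hxy.ne.symm), h])

end Forest

lemma exists_isCycle_of_not_adj {H : SimpleGraph V} (hHG : H ≤ G) {a b : V}
    (hab : G.Adj a b) (hH : ¬ H.Adj a b) (hr : H.Reachable b a) :
    ∃ c : G.Walk a a, c.IsCycle ∧ s(a, b) ∈ c.edges ∧
      ∀ e ∈ c.edges, e = s(a, b) ∨ e ∈ H.edgeSet := by
  classical
  obtain ⟨p, hp⟩ := hr.some.toPath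
  refine ⟨Walk.cons hab (p.mapLe hHG), ?_, by simp, ?_⟩
  · refine (Walk.cons_isCycle_iff _ hab).2 ⟨hp.mapLe hHG, ?_⟩
    rw [Walk.edges_mapLe_eq_edges]
    exact fun h ↦ hH (p.edges_subset_edgeSet h)
  · intro e he
    rw [Walk.edges_cons, Walk.edges_mapLe_eq_edges, List.mem_cons] at he
    exact he.imp_right fun h ↦ p.edges_subset_edgeSet h

end SimpleGraph

namespace IsSidewalk

variable {V : Type*} {G H : SimpleGraph V}

lemma eq_of_not_adj (hG : IsSidewalk G) (hHG : H ≤ G) (hreach : H.Reachable = G.Reachable)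
    {a b c d : V} (hab : G.Adj a b) (hHab : ¬ H.Adj a b) (hcd : G.Adj c d) (hHcd : ¬ H.Adj c d)
    (hac : G.Reachable a c) : s(a, b) = s(c, d) := by
  have hr : ∀ {x y}, G.Adj x y → H.Reachable y x := fun h ↦ hreach ▸ h.symm.reachable
  obtain ⟨c₁, hc₁, hab₁, -⟩ := exists_isCycle_of_not_adj hHG hab hHab (hr hab)
  obtain ⟨c₂, hc₂, -, hsub₂⟩ := exists_isCycle_of_not_adj hHG hcd hHcd (hr hcd)
  have hab₂ : s(a, b) ∈ c₂.edges := (Set.ext_iff.1 (hG c₁ c₂ hc₁ hc₂ hac) _).1 hab₁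
  exact (hsub₂ _ hab₂).resolve_right hHab

lemma exists_forall_not_adj_eq (hG : IsSidewalk G) (hHG : H ≤ G)
    (hreach : H.Reachable = G.Reachable) (K : G.ConnectedComponent) :
    ∃ r s : V, G.connectedComponentMk r = K ∧
      ∀ ⦃a b⦄, G.Adj a b → ¬ H.Adj a b → G.connectedComponentMk a = K →
        s(a, b) = s(r, s) := by
  by_cases h : ∃ a b, G.Adj a b ∧ ¬ H.Adj a b ∧ G.connectedComponentMk a = K
  · obtain ⟨r, s, hrs, hHrs, rfl⟩ := h
    refine ⟨r, s, rfl, fun a b hab hHab haK ↦ ?_⟩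
    exact hG.eq_of_not_adj hHG hreach hab hHab hrs hHrs (ConnectedComponent.exact haK)
  · obtain ⟨r, rfl⟩ := K.exists_rep
    exact ⟨r, r, rfl, fun a b hab hHab haK ↦ (h ⟨a, b, hab, hHab, haK⟩).elim⟩

theorem exists_le_fromRel (hG : IsSidewalk G) : ∃ f : V → V, G ≤ fromRel (f · = ·) := by
  classical
  obtain ⟨H, hHG, hH, hreach⟩ := G.exists_isAcyclic_reachable_eq_le
  choose r s hr hrs using hG.exists_forall_not_adj_eq hHG hreach
  let f (K : G.ConnectedComponent) : V → V := update (towards H (r K)) (r K) (s K)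
  refine ⟨fun x ↦ f (G.connectedComponentMk x) x, fun x y hxy ↦ ⟨hxy.ne, ?_⟩⟩
  obtain ⟨K, hxK⟩ : ∃ K, G.connectedComponentMk x = K := ⟨_, rfl⟩
  have hyK : G.connectedComponentMk y = K :=
    (ConnectedComponent.connectedComponentMk_eq_of_adj hxy).symm.trans hxK
  simp only [hxK, hyK]
  by_cases hHxy : H.Adj x y
  · refine hH.update_towards_eq_or hHxy ?_ (s K)
    exact hreach ▸ ConnectedComponent.exact (hxK.trans (hr K).symm)
  · rcases Sym2.eq_iff.1 (hrs K hxy hHxy hxK) with ⟨rfl, rfl⟩ | ⟨rfl, rfl⟩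
    · exact .inl (update_self ..)
    · exact .inr (update_self ..)

end IsSidewalk

theorem isSidewalk_iff_exists_le_fromRel {V : Type*} {G : SimpleGraph V} :
    IsSidewalk G ↔ ∃ f : V → V, G ≤ fromRel (f · = ·) :=
  ⟨IsSidewalk.exists_le_fromRel, fun ⟨_, hf⟩ ↦ isSidewalk_of_le_fromRel hf⟩

theorem exists_isOrientation_encard_le_one_iff {V : Type*} {G : SimpleGraph V} :
    (∃ o : V → V → Prop, IsOrientation G o ∧ ∀ x, {y | o x y}.encard ≤ 1) ↔
      ∃ f : V → V, G ≤ fromRel (f · = ·) := by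
  classical
  constructor
  · rintro ⟨o, ho, hout⟩
    let f x := if h : ∃ y, o x y then h.choose else x
    have hf : ∀ {x y}, o x y → f x = y := by
      intro x y h
      have hex : ∃ y, o x y := ⟨y, h⟩
      have hfx : o x (f x) := by
        simp only [f, dif_pos hex]
        exact hex.choose_spec
      exact encard_le_one_iff.1 (hout x) _ _ hfx h
    exact ⟨f, fun x y hxy ↦ ⟨hxy.ne, ((ho x y).1 hxy).imp hf hf⟩⟩
  · rintro ⟨f, hf⟩
    refine ⟨fun x y ↦ G.Adj x y ∧ f x = y, fun x y ↦ ⟨fun h ↦ ?_, ?_⟩, fun x ↦ ?_⟩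
    · exact (hf h).2.imp (And.intro h) (And.intro h.symm)
    · rintro (⟨h, -⟩ | ⟨h, -⟩)
      exacts [h, h.symm]
    · exact encard_le_one_iff.2 fun _ _ ha hb ↦ ha.2.symm.trans hb.2

/-- `G` admits an orientation with all outdegrees at most 1 iff `G` is a sidewalk. -/
theorem one_orientable_iff_sidewalk {V : Type*} (G : SimpleGraph V) :
    (∃ o : V → V → Prop, IsOrientation G o ∧ ∀ x, {y | o x y}.encard ≤ 1) ↔
      IsSidewalk G :=
  exists_isOrientation_encard_le_one_iff.trans isSidewalk_iff_exists_le_fromRel.symm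
end

section
/- Flipping an augmenting chain preserves outdegrees at interior vertices: if o is an orientation of a graph G and p = (x₀,...,xₙ) is a directed path in o with distinct vertices, and o' is obtained from o by reversing every edge of p, then for every vertex v not equal to x₀ or xₙ, the outdegree of v under o' equals its outdegree under o; moreover the outdegree of x₀ decreases by 1 and the outdegree of xₙ increases by 1. -/
/-- An orientation giving each edge exactly one direction. -/
def IsStrictOrientation {V : Type*} (G : SimpleGraph V) (o : V → V → Prop) : Prop :=
  IsOrientation G o ∧ ∀ x y, ¬(o x y ∧ o y x)

/-!
Fix a vertex `v`. Flipping the path removes from the out-neighbourhood of `v` the successor of `v`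
on the path (if `v` has one), which is an out-neighbour because the path is directed, and adds the
predecessor of `v` (if it has one), which was not an out-neighbour because `o` is asymmetric. By
injectivity of the path, interior vertices have both a predecessor and a successor, `x₀` only a
successor and `xₙ` only a predecessor.
-/

open Set Function

theorem Set.encard_union_sdiff_add_encard {α : Type*} {A S P : Set α} (hS : S ⊆ A)
    (hP : Disjoint P A) : (P ∪ (A \ S)).encard + S.encard = A.encard + P.encard := by
  rw [encard_union_eq (hP.mono_right sdiff_subset), add_assoc,
    encard_sdiff_add_encard_of_subset hS, add_comm]

theorem Fin.encard_preimage_castSucc {n : ℕ} (s : Set (Fin (n + 1))) :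
    (castSucc ⁻¹' s).encard = (s \ {last n}).encard := by
  have hrange : s \ {last n} ⊆ range castSucc := fun j hj =>
    Fin.exists_castSucc_eq.mpr hj.2
  rw [← encard_preimage_of_injective_subset_range (castSucc_injective n) hrange,
    preimage_sdiff, preimage_singleton_eq_empty.mpr (by simp), sdiff_empty]

theorem Fin.encard_preimage_succ {n : ℕ} (s : Set (Fin (n + 1))) :
    (succ ⁻¹' s).encard = (s \ {0}).encard := by
  have hrange : s \ {0} ⊆ range succ := by
    rw [range_succ]; exact sdiff_subset_compl s {0}
  rw [← encard_preimage_of_injective_subset_range (succ_injective n) hrange,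
    preimage_sdiff, preimage_singleton_eq_empty.mpr (by simp), sdiff_empty]

section Flip

variable {V ι : Type*} {o o' : V → V → Prop} {f g : ι → V}

theorem setOf_flip_eq
    (ho' : ∀ u v, o' u v ↔
      ((∃ i, u = g i ∧ v = f i) ∨ (o u v ∧ ¬∃ i, u = f i ∧ v = g i))) (v : V) :
    {w | o' v w} = f '' (g ⁻¹' {v}) ∪ ({w | o v w} \ g '' (f ⁻¹' {v})) := by
  ext w
  simp only [ho', mem_ofPred_eq, mem_union, mem_image, mem_preimage, mem_singleton_iff,
    mem_sdiff]
  grind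

theorem encard_flip_add (hasymm : ∀ u v, ¬(o u v ∧ o v u)) (hedge : ∀ i, o (f i) (g i))
    (hf : Injective f) (hg : Injective g)
    (ho' : ∀ u v, o' u v ↔
      ((∃ i, u = g i ∧ v = f i) ∨ (o u v ∧ ¬∃ i, u = f i ∧ v = g i))) (v : V) :
    {w | o' v w}.encard + (f ⁻¹' {v}).encard = {w | o v w}.encard + (g ⁻¹' {v}).encard := by
  have hsub : g '' (f ⁻¹' {v}) ⊆ {w | o v w} := by
    rintro _ ⟨i, rfl, rfl⟩
    exact hedge i
  have hdisj : Disjoint (f '' (g ⁻¹' {v})) {w | o v w} := by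
    rw [disjoint_left]
    rintro _ ⟨i, rfl, rfl⟩ h
    exact hasymm _ _ ⟨h, hedge i⟩
  rw [setOf_flip_eq ho', ← hg.encard_image, ← hf.encard_image (g ⁻¹' {v})]
  exact encard_union_sdiff_add_encard hsub hdisj

end Flip

theorem encard_flip_path_add {V : Type*} {o o' : V → V → Prop}
    (hasymm : ∀ u v, ¬(o u v ∧ o v u)) {n : ℕ} {x : Fin (n + 1) → V} (hinj : Injective x)
    (hpath : ∀ i : Fin n, o (x i.castSucc) (x i.succ))
    (ho' : ∀ u v, o' u v ↔
      ((∃ i : Fin n, u = x i.succ ∧ v = x i.castSucc) ∨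
        (o u v ∧ ¬∃ i : Fin n, u = x i.castSucc ∧ v = x i.succ))) (v : V) :
    {w | o' v w}.encard + (x ⁻¹' {v} \ {Fin.last n}).encard =
      {w | o v w}.encard + (x ⁻¹' {v} \ {0}).encard := by
  rw [← Fin.encard_preimage_castSucc, ← Fin.encard_preimage_succ]
  exact encard_flip_add (f := x ∘ Fin.castSucc) (g := x ∘ Fin.succ) hasymm hpath
    (hinj.comp (Fin.castSucc_injective n)) (hinj.comp (Fin.succ_injective n)) ho' v

/-- Flipping a directed path `x₀, …, xₙ` (with distinct vertices) preserves
outdegrees at interior vertices, decreases the outdegree of `x₀` by one, and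
increases the outdegree of `xₙ` by one. -/
theorem flip_augmenting_chain {V : Type*} (G : SimpleGraph V)
    (o o' : V → V → Prop) (ho : IsStrictOrientation G o)
    (n : ℕ) (hn : 1 ≤ n) (x : Fin (n + 1) → V) (hinj : Function.Injective x)
    (hpath : ∀ i : Fin n, o (x i.castSucc) (x i.succ))
    (ho' : ∀ u v, o' u v ↔
      ((∃ i : Fin n, u = x i.succ ∧ v = x i.castSucc) ∨
        (o u v ∧ ¬∃ i : Fin n, u = x i.castSucc ∧ v = x i.succ))) :
    (∀ v, v ≠ x 0 → v ≠ x (Fin.last n) →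
        {w | o' v w}.encard = {w | o v w}.encard) ∧
    {w | o' (x 0) w}.encard + 1 = {w | o (x 0) w}.encard ∧
    {w | o' (x (Fin.last n)) w}.encard = {w | o (x (Fin.last n)) w}.encard + 1 := by
  have key := encard_flip_path_add ho.2 hinj hpath ho'
  have hfiber (k : Fin (n + 1)) : x ⁻¹' {x k} = {k} := by
    rw [← image_singleton, hinj.preimage_image]
  have hzero_ne_last : (0 : Fin (n + 1)) ≠ Fin.last n := by
    simpa [Fin.ext_iff] using (by omega : 0 ≠ n)
  refine ⟨fun v hv0 hvl => ?_, ?_, ?_⟩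
  · have h := key v
    have hfinite : (x ⁻¹' {v}).encard ≠ ⊤ := (toFinite _).encard_lt_top.ne
    have hvl' : Fin.last n ∉ x ⁻¹' {v} := fun h => hvl h.symm
    have hv0' : 0 ∉ x ⁻¹' {v} := fun h => hv0 h.symm
    rwa [sdiff_singleton_eq_self hvl', sdiff_singleton_eq_self hv0',
      (ENat.add_left_injective_of_ne_top hfinite).eq_iff] at h
  · have h := key (x 0)
    rwa [hfiber, sdiff_singleton_eq_self (mt mem_singleton_iff.mp hzero_ne_last.symm),
      Set.sdiff_self, encard_empty, encard_singleton, add_zero] at h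
  · have h := key (x (Fin.last n))
    rwa [hfiber, sdiff_singleton_eq_self (mt mem_singleton_iff.mp hzero_ne_last),
      Set.sdiff_self, encard_empty, encard_singleton, add_zero] at h
end

section
/- Let G be a finite graph and k an integer such that for every nonempty A ⊆ V(G), the number of edges of the induced subgraph G↾A is strictly less than k·|A|. Then if an orientation o admits no augmenting chain of length at most n (i.e., no directed path of length ≤ n from a vertex of outdegree > k to a vertex of outdegree < k), the number of vertices of outdegree > k satisfies |O| ≤ (α/k)ⁿ · |V(G)|, where α = max over nonempty A of (edges of G↾A)/|A| < k. In particular, if n is large enough that (α/k)ⁿ·|V(G)| < 1, then every vertex has outdegree ≤ k. -/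
/-! Let `O` be the set of vertices of outdegree `> k` and `Bᵢ = B⁺ᵢ(O)`. With no augmenting chain
of length `≤ n`, every vertex of `Bᵢ` for `i ≤ n` has outdegree `≥ k`, and all its out-arcs stay
inside `Bᵢ₊₁`; as `o` orients each edge once, `k·|Bᵢ| ≤ e(G↾Bᵢ₊₁) ≤ α·|Bᵢ₊₁|`. Chaining these
`n` inequalities gives `kⁿ·|O| ≤ αⁿ·|Bₙ| ≤ αⁿ·|V|`. -/

open Finset

theorem pow_mul_le_pow_mul_of_mul_le_mul_succ {R : Type*} [CommSemiring R] [PartialOrder R]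
    [IsOrderedRing R] {a c : R} {b : ℕ → R} {n : ℕ} (ha : 0 ≤ a) (hc : 0 ≤ c)
    (h : ∀ i < n, c * b i ≤ a * b (i + 1)) : c ^ n * b 0 ≤ a ^ n * b n := by
  induction n with
  | zero => simp
  | succ n ih =>
    calc c ^ (n + 1) * b 0 = c * (c ^ n * b 0) := by ring
      _ ≤ c * (a ^ n * b n) := mul_le_mul_of_nonneg_left (ih fun i hi => h i (by omega)) hc
      _ = a ^ n * (c * b n) := by ring
      _ ≤ a ^ n * (a * b (n + 1)) :=
          mul_le_mul_of_nonneg_left (h n n.lt_succ_self) (pow_nonneg ha n)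
      _ = a ^ (n + 1) * b (n + 1) := by ring

theorem ncard_edgeSet_induce_le_mul_card {V K : Type*} [Field K] [LinearOrder K]
    [IsStrictOrderedRing K] {G : SimpleGraph V} {α : K}
    (hα : α ∈ upperBounds {q : K | ∃ A : Finset V, A.Nonempty ∧
      q = ((G.induce (A : Set V)).edgeSet.ncard : K) / A.card}) (A : Finset V) :
    ((G.induce (A : Set V)).edgeSet.ncard : K) ≤ α * #A := by
  obtain rfl | hA := A.eq_empty_or_nonempty
  · simp [SimpleGraph.edgeSet_eq_empty.2 (Subsingleton.elim _ _)]
  · exact (div_le_iff₀ (by exact_mod_cast hA.card_pos)).1 (hα ⟨A, hA, rfl⟩)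

section Orientation

variable {V : Type*} {G : SimpleGraph V} {o : V → V → Prop}

theorem IsStrictOrientation.ncard_arcs_eq_ncard_edgeSet_induce (ho : IsStrictOrientation G o)
    (S : Set V) :
    {p : V × V | p.1 ∈ S ∧ p.2 ∈ S ∧ o p.1 p.2}.ncard = (G.induce S).edgeSet.ncard := by
  refine Set.ncard_congr (fun p hp => s(⟨p.1, hp.1⟩, ⟨p.2, hp.2.1⟩))
    (fun p hp => (ho.1 _ _).2 (Or.inl hp.2.2)) ?_ ?_
  · intro p q hp hq h
    simp only [Sym2.eq_iff, Subtype.mk.injEq] at h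
    rcases h with ⟨h₁, h₂⟩ | ⟨h₁, h₂⟩
    · exact Prod.ext h₁ h₂
    · exact (ho.2 _ _ ⟨hp.2.2, by rw [h₁, h₂]; exact hq.2.2⟩).elim
  · intro e he
    induction e using Sym2.inductionOn with
    | hf a b =>
      rcases (ho.1 a b).1 he with hab | hba
      · exact ⟨(a, b), ⟨a.2, b.2, hab⟩, rfl⟩
      · exact ⟨(b, a), ⟨b.2, a.2, hba⟩, Sym2.eq_swap⟩

variable [Fintype V]

variable (o) in
theorem sum_ncard_setOf_eq_ncard_arcs (B : Finset V) :
    ∑ v ∈ B, {y | o v y}.ncard = {p : V × V | p.1 ∈ B ∧ o p.1 p.2}.ncard := by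
  classical
  have : {p : V × V | p.1 ∈ B ∧ o p.1 p.2} = ↑({p ∈ B ×ˢ (univ : Finset V) | o p.1 p.2}) := by
    ext; simp
  rw [this, Set.ncard_coe_finset, card_filter, sum_product]
  simp [Set.ncard_eq_toFinset_card']

variable [DecidableEq V] [DecidableRel o]

variable (o) in
/-- `B⁺(A)`; its iterates `(outClosure o)^[n] A` are the sets `B⁺ₙ(A)`. -/
def outClosure (A : Finset V) : Finset V := A ∪ ({y | ∃ x ∈ A, o x y} : Finset V)

theorem subset_outClosure {A : Finset V} : A ⊆ outClosure o A := subset_union_left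

theorem mem_outClosure_of_mem {A : Finset V} {x y : V} (hx : x ∈ A) (hxy : o x y) :
    y ∈ outClosure o A :=
  mem_union_right _ (mem_filter.2 ⟨mem_univ _, x, hx, hxy⟩)

theorem IsStrictOrientation.sum_ncard_le_ncard_edgeSet_induce_outClosure
    (ho : IsStrictOrientation G o) (B : Finset V) :
    ∑ v ∈ B, {y | o v y}.ncard ≤ (G.induce (outClosure o B : Set V)).edgeSet.ncard := by
  rw [sum_ncard_setOf_eq_ncard_arcs, ← ho.ncard_arcs_eq_ncard_edgeSet_induce]
  exact Set.ncard_le_ncard fun p hp =>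
    ⟨subset_outClosure hp.1, mem_outClosure_of_mem hp.1 hp.2, hp.2⟩

theorem IsStrictOrientation.mul_card_le_mul_card_outClosure {K : Type*} [Field K]
    [LinearOrder K] [IsStrictOrderedRing K] (ho : IsStrictOrientation G o) {α : K}
    (hα : α ∈ upperBounds {q : K | ∃ A : Finset V, A.Nonempty ∧
      q = ((G.induce (A : Set V)).edgeSet.ncard : K) / A.card})
    {k : ℕ} {B : Finset V} (hB : ∀ v ∈ B, k ≤ {y | o v y}.ncard) :
    (k : K) * #B ≤ α * #(outClosure o B) :=
  calc (k : K) * #B ≤ ∑ v ∈ B, {y | o v y}.ncard := by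
        rw [mul_comm]
        exact_mod_cast card_nsmul_le_sum _ _ _ hB
    _ ≤ (G.induce (outClosure o B : Set V)).edgeSet.ncard := by
        exact_mod_cast ho.sum_ncard_le_ncard_edgeSet_induce_outClosure B
    _ ≤ α * #(outClosure o B) := ncard_edgeSet_induce_le_mul_card hα _

theorem exists_chain_of_mem_iterate_outClosure {A : Finset V} {n : ℕ} {v : V}
    (hv : v ∈ (outClosure o)^[n] A) :
    ∃ m ≤ n, ∃ x : ℕ → V, x 0 ∈ A ∧ (∀ i < m, o (x i) (x (i + 1))) ∧ x m = v := by
  induction n generalizing v with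
  | zero => exact ⟨0, le_rfl, fun _ => v, hv, by simp, rfl⟩
  | succ n ih =>
    rw [Function.iterate_succ_apply', outClosure, mem_union, mem_filter] at hv
    rcases hv with hv | ⟨-, u, hu, huv⟩
    · obtain ⟨m, hm, x, hx0, hx, rfl⟩ := ih hv
      exact ⟨m, by omega, x, hx0, hx, rfl⟩
    · obtain ⟨m, hm, x, hx0, hx, rfl⟩ := ih hu
      refine ⟨m + 1, by omega, fun i => if i ≤ m then x i else v, by simpa using hx0,
        fun i hi => ?_, by simp⟩
      obtain hi | rfl := Nat.lt_succ_iff_lt_or_eq.1 hi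
      · simpa [hi.le, Nat.succ_le_of_lt hi] using hx i hi
      · simpa using huv

variable (o) in
def HasAugmentingChainWithin (k n : ℕ) : Prop :=
  ∃ (m : ℕ) (x : ℕ → V), m ≤ n ∧ (∀ i < m, o (x i) (x (i + 1))) ∧
    k < {y | o (x 0) y}.ncard ∧ {y | o (x m) y}.ncard < k

theorem le_ncard_of_mem_iterate_outClosure {k n i : ℕ} (haug : ¬HasAugmentingChainWithin o k n)
    (hi : i ≤ n) {v : V} (hv : v ∈ (outClosure o)^[i] {u | k < {y | o u y}.ncard}) :
    k ≤ {y | o v y}.ncard := by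
  obtain ⟨m, hm, x, hx0, hx, rfl⟩ := exists_chain_of_mem_iterate_outClosure hv
  exact not_lt.1 fun hlt => haug ⟨m, x, hm.trans hi, hx, (mem_filter.1 hx0).2, hlt⟩

end Orientation

theorem outdeg_bound_of_no_augmenting_chain_general {V : Type*} [Finite V]
    (G : SimpleGraph V) (k n : ℕ) (o : V → V → Prop)
    (ho : IsStrictOrientation G o)
    (α : ℚ)
    (hα : IsGreatest {q : ℚ | ∃ A : Finset V, A.Nonempty ∧
      q = ((G.induce (A : Set V)).edgeSet.ncard : ℚ) / A.card} α)
    (hαk : α < k)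
    (haug : ¬∃ (m : ℕ) (x : ℕ → V), m ≤ n ∧ (∀ i < m, o (x i) (x (i + 1))) ∧
      k < {y | o (x 0) y}.ncard ∧ {y | o (x m) y}.ncard < k) :
    (({v | k < {y | o v y}.ncard} : Set V).ncard : ℚ) ≤ (α / k) ^ n * Nat.card V ∧
      ((α / k) ^ n * (Nat.card V : ℚ) < 1 → ∀ v, {y | o v y}.ncard ≤ k) := by
  classical
  cases nonempty_fintype V
  obtain ⟨⟨A, -, hαA⟩, hαmax⟩ := hα
  have hα0 : 0 ≤ α := hαA ▸ by positivity
  have hk : (0 : ℚ) < k := hα0.trans_lt hαk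
  set O : Finset V := {v | k < {y | o v y}.ncard} with hO
  have hstep : ∀ i < n, (k : ℚ) * #((outClosure o)^[i] O) ≤ α * #((outClosure o)^[i + 1] O) :=
    fun i hi => Function.iterate_succ_apply' (outClosure o) i O ▸
      ho.mul_card_le_mul_card_outClosure hαmax fun v hv =>
        le_ncard_of_mem_iterate_outClosure haug hi.le hv
  have hcard : (#O : ℚ) ≤ (α / k) ^ n * Nat.card V := by
    rw [div_pow, div_mul_eq_mul_div, le_div_iff₀ (by positivity), mul_comm]
    calc (k : ℚ) ^ n * #O ≤ α ^ n * #((outClosure o)^[n] O) :=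
          pow_mul_le_pow_mul_of_mul_le_mul_succ (b := fun i => (#((outClosure o)^[i] O) : ℚ))
            hα0 hk.le hstep
      _ ≤ α ^ n * Nat.card V := by
          gcongr
          exact_mod_cast (card_le_univ _).trans_eq Fintype.card_eq_nat_card
  have hOset : ({v | k < {y | o v y}.ncard} : Set V).ncard = #O := by
    rw [← Set.ncard_coe_finset]
    congr
    ext
    simp [hO]
  refine ⟨hOset ▸ hcard, fun hsmall v => not_lt.1 fun hv => ?_⟩
  have : (1 : ℚ) ≤ #O := by exact_mod_cast card_pos.2 ⟨v, by simpa [hO] using hv⟩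
  linarith

/-- If every nonempty `A` spans fewer than `k·|A|` edges, `α` is the maximum
edge density `e(G↾A)/|A| < k`, and the orientation `o` admits no augmenting
chain of length at most `n`, then the set `O` of vertices of outdegree `> k`
satisfies `|O| ≤ (α/k)ⁿ·|V|`; in particular if `(α/k)ⁿ·|V| < 1` then every
vertex has outdegree at most `k`. -/
theorem outdeg_bound_of_no_augmenting_chain {V : Type*} [Finite V]
    (G : SimpleGraph V) (k n : ℕ) (o : V → V → Prop)
    (ho : IsStrictOrientation G o)
    (hlt : ∀ A : Finset V, A.Nonempty →
      (G.induce (A : Set V)).edgeSet.ncard < k * A.card)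
    (α : ℚ)
    (hα : IsGreatest {q : ℚ | ∃ A : Finset V, A.Nonempty ∧
      q = ((G.induce (A : Set V)).edgeSet.ncard : ℚ) / A.card} α)
    (hαk : α < k)
    (haug : ¬∃ (m : ℕ) (x : ℕ → V), m ≤ n ∧ (∀ i < m, o (x i) (x (i + 1))) ∧
      k < {y | o (x 0) y}.ncard ∧ {y | o (x m) y}.ncard < k) :
    (({v | k < {y | o v y}.ncard} : Set V).ncard : ℚ) ≤ (α / k) ^ n * Nat.card V ∧
      ((α / k) ^ n * (Nat.card V : ℚ) < 1 → ∀ v, {y | o v y}.ncard ≤ k) :=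
  outdeg_bound_of_no_augmenting_chain_general G k n o ho α hα hαk haug
end

section
/- Every finite graph G with max over nonempty A ⊆ V(G) of ⌈e(G↾A)/|A|⌉ ≤ k admits an orientation with all outdegrees at most k, where e(G↾A) denotes the number of edges of the induced subgraph on A. (Hakimi orientation theorem, the finite analogue of the paper's main theorem.) -/
open Finset

namespace SimpleGraph

variable {V : Type*} (G : SimpleGraph V)

def orientationOfTail (t : G.edgeSet → V) (x y : V) : Prop :=
  ∃ h : G.Adj x y, t ⟨s(x, y), G.mem_edgeSet.2 h⟩ = x

variable {G}

lemma isStrictOrientation_orientationOfTail {t : G.edgeSet → V}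
    (ht : ∀ e : G.edgeSet, t e ∈ (e : Sym2 V)) :
    IsStrictOrientation G (G.orientationOfTail t) := by
  have swap : ∀ {x y} (h : G.Adj x y),
      (⟨s(y, x), G.mem_edgeSet.2 h.symm⟩ : G.edgeSet) = ⟨s(x, y), G.mem_edgeSet.2 h⟩ :=
    fun _ => Subtype.ext Sym2.eq_swap
  refine ⟨fun x y => ⟨fun h => ?_, ?_⟩, ?_⟩
  · rcases Sym2.mem_iff.mp (ht ⟨s(x, y), G.mem_edgeSet.2 h⟩) with hx | hy
    · exact .inl ⟨h, hx⟩
    · exact .inr ⟨h.symm, by rw [swap h]; exact hy⟩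
  · rintro (⟨h, -⟩ | ⟨h, -⟩)
    exacts [h, h.symm]
  · rintro x y ⟨⟨h, hx⟩, ⟨_, hy⟩⟩
    rw [swap h] at hy
    exact h.ne (hx.symm.trans hy)

lemma ncard_setOf_orientationOfTail_le {t : G.edgeSet → V} {k : ℕ} (slot : G.edgeSet → Fin k)
    (hslot : ∀ x, Set.InjOn slot (t ⁻¹' {x})) (x : V) :
    {y | G.orientationOfTail t x y}.ncard ≤ k := by
  let g : {y | G.orientationOfTail t x y} → Fin k :=
    fun y => slot ⟨s(x, y), G.mem_edgeSet.2 y.2.1⟩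
  have hg : Function.Injective g := by
    rintro ⟨y, hy, hty⟩ ⟨y', hy', hty'⟩ hgy
    have hedge := hslot x hty hty' hgy
    simp only [Subtype.mk.injEq, Sym2.eq_iff] at hedge ⊢
    rcases hedge with ⟨-, rfl⟩ | ⟨rfl, -⟩
    exacts [rfl, absurd rfl hy'.ne]
  simpa using Nat.card_le_card_of_injective g hg

lemma card_le_ncard_edgeSet_induce [Finite V] {A : Set V} (s : Finset G.edgeSet)
    (hs : ∀ e ∈ s, ∀ v ∈ (e : Sym2 V), v ∈ A) :
    #s ≤ (G.induce A).edgeSet.ncard := by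
  let ι := (Embedding.induce (G := G) A).mapEdgeSet
  have hsub : (s : Set G.edgeSet) ⊆ Set.range ι := by
    rintro ⟨e, he⟩ hes
    induction e using Sym2.ind with
    | _ a b =>
      have ha := hs _ hes a (Sym2.mem_mk_left a b)
      have hb := hs _ hes b (Sym2.mem_mk_right a b)
      exact ⟨⟨s(⟨a, ha⟩, ⟨b, hb⟩), he⟩, rfl⟩
  calc #s = (s : Set G.edgeSet).ncard := (Set.ncard_coe_finset s).symm
    _ ≤ (Set.range ι).ncard := Set.ncard_le_ncard hsub
    _ = (G.induce A).edgeSet.ncard := by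
      rw [Set.ncard_range_of_injective ι.injective, Nat.card_coe_set_eq]

theorem exists_injective_incidence_slot [Finite V] {k : ℕ}
    (hdense : ∀ A : Finset V, A.Nonempty → (G.induce (A : Set V)).edgeSet.ncard ≤ #A * k) :
    ∃ f : G.edgeSet → V × Fin k,
      Function.Injective f ∧ ∀ e : G.edgeSet, (f e).1 ∈ (e : Sym2 V) := by
  classical
  let slots : G.edgeSet → Finset (V × Fin k) := fun e => (e : Sym2 V).toFinset ×ˢ univ
  suffices hall : ∀ s : Finset G.edgeSet, #s ≤ #(s.biUnion slots) by
    obtain ⟨f, hf, hslots⟩ := (all_card_le_biUnion_card_iff_exists_injective slots).mp hall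
    exact ⟨f, hf, fun e => by simpa [slots] using (mem_product.mp (hslots e)).1⟩
  intro s
  rcases s.eq_empty_or_nonempty with rfl | ⟨e, he⟩
  · simp
  let A := s.biUnion fun e => (e : Sym2 V).toFinset
  have hA : A.Nonempty := ⟨_, mem_biUnion.2 ⟨e, he, Sym2.mem_toFinset.2 (Sym2.out_fst_mem _)⟩⟩
  have hslots : s.biUnion slots = A ×ˢ univ := by
    ext
    simp [slots, A]
  calc #s ≤ (G.induce (A : Set V)).edgeSet.ncard :=
        card_le_ncard_edgeSet_induce s fun e he v hv =>
          mem_biUnion.2 ⟨e, he, Sym2.mem_toFinset.2 hv⟩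
    _ ≤ #A * k := hdense A hA
    _ = #(s.biUnion slots) := by simp [hslots]

end SimpleGraph

/-- Hakimi's orientation theorem: if `⌈e(G↾A)/|A|⌉ ≤ k` for every nonempty
vertex set `A` of a finite graph, then `G` admits an orientation with all
outdegrees at most `k`. -/
theorem hakimi_orientation {V : Type*} [Finite V] (G : SimpleGraph V) (k : ℕ)
    (hk : ∀ A : Finset V, A.Nonempty →
      ((G.induce (A : Set V)).edgeSet.ncard + A.card - 1) / A.card ≤ k) :
    ∃ o : V → V → Prop, IsStrictOrientation G o ∧ ∀ x, {y | o x y}.ncard ≤ k := by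
  have hdense : ∀ A : Finset V, A.Nonempty → (G.induce (A : Set V)).edgeSet.ncard ≤ #A * k := by
    intro A hA
    have hpos := hA.card_pos
    have := (Nat.div_le_iff_le_mul_add_pred hpos).mp (hk A hA)
    omega
  obtain ⟨f, hf, hmem⟩ := G.exists_injective_incidence_slot hdense
  refine ⟨G.orientationOfTail fun e => (f e).1,
    SimpleGraph.isStrictOrientation_orientationOfTail hmem,
    SimpleGraph.ncard_setOf_orientationOfTail_le (fun e => (f e).2) fun x e he e' he' hslot => ?_⟩
  exact hf (Prod.ext (he.trans he'.symm) hslot)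
end

section
/- Let Γ = (ℤ/2ℤ) ∗ (ℤ/2ℤ) = ⟨a,b : a² = b² = 1⟩ act freely on a standard probability space (X,μ) by measure-preserving transformations, and let G be the graph connecting x to a·x and to b·x. Then G admits no μ-measurable orientation with all outdegrees at most 1, provided the transformation ab acts ergodically. (Each component of G is a bi-infinite path; a measurable 1-orientation would give an (ab)-invariant measurable set A = {x : (x, a·x) ∈ o} that is neither null nor conull, contradicting ergodicity.) -/
/-!
Let `S = {x | x → a x}` and `T = {x | x → b x}`. Outdegree at most 1 makes `S` and `T` disjoint,
while orienting every edge gives, almost everywhere, `x ∈ S ∨ a x ∈ S` and `x ∈ T ∨ b x ∈ T`.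
As `a` and `b` preserve `μ`, this forces `μ S = μ T = 1/2`; hence almost surely exactly one of
`x`, `a x` lies in `S`, exactly one of `x`, `b x` lies in `T`, and `S`, `T` partition `X`.
Chaining these, `x ∈ T ↔ b x ∈ S ↔ a (b x) ∈ T` almost everywhere, so `T` is an
`(a ∘ b)`-invariant set of measure `1/2`, contradicting ergodicity.
-/

open MeasureTheory Set

section

variable {X : Type*} {f g : X → X}

lemma disjoint_setOf_of_encard_le_one {o : X → X → Prop} (hout : ∀ x, {y | o x y}.encard ≤ 1)
    (hfg : ∀ x, f x ≠ g x) : Disjoint {x | o x (f x)} {x | o x (g x)} :=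
  disjoint_left.2 fun x hfx hgx => (hout x).not_gt (one_lt_encard_iff.2 ⟨f x, g x, hfx, hgx, hfg x⟩)

variable [MeasurableSpace X] {μ : Measure X} {S T : Set X}

lemma ae_mem_of_measureReal_eq_univ [IsFiniteMeasure μ] (hS : NullMeasurableSet S μ)
    (h : μ.real S = μ.real univ) : ∀ᵐ x ∂μ, x ∈ S := by
  refine mem_ae_iff.2 <| (measureReal_eq_zero_iff (measure_ne_top _ _)).1 ?_
  show μ.real Sᶜ = 0
  rw [measureReal_compl₀ hS, h, sub_self]

lemma measureReal_univ_le_two_mul (hf : MeasurePreserving f μ μ) (hS : NullMeasurableSet S μ)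
    (hcov : ∀ᵐ x ∂μ, x ∈ S ∨ f x ∈ S) : μ.real univ ≤ 2 * μ.real S :=
  calc μ.real univ = μ.real (S ∪ f ⁻¹' S) :=
        measureReal_congr (ae_eq_univ.2 (mem_ae_iff.1 hcov)).symm
    _ ≤ μ.real S + μ.real (f ⁻¹' S) := measureReal_union_le _ _
    _ = 2 * μ.real S := by rw [hf.measureReal_preimage hS, two_mul]

lemma ae_mem_iff_apply_notMem [IsFiniteMeasure μ] (hf : MeasurePreserving f μ μ)
    (hS : NullMeasurableSet S μ)
    (hcov : ∀ᵐ x ∂μ, x ∈ S ∨ f x ∈ S) (hS_le : 2 * μ.real S ≤ μ.real univ) :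
    ∀ᵐ x ∂μ, (x ∈ S ↔ f x ∉ S) := by
  have hunion : μ.real (S ∪ f ⁻¹' S) = μ.real univ :=
    measureReal_congr (ae_eq_univ.2 (mem_ae_iff.1 hcov))
  have hinter : μ (S ∩ f ⁻¹' S) = 0 := by
    refine (measureReal_eq_zero_iff (measure_ne_top _ _)).1 (le_antisymm ?_ measureReal_nonneg)
    have hsum := measureReal_union_add_inter₀' (t := f ⁻¹' S) hS
    rw [hf.measureReal_preimage hS] at hsum
    linarith
  filter_upwards [hcov, measure_eq_zero_iff_ae_notMem.1 hinter] with x h1 h2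
  simp only [mem_inter_iff, mem_preimage, not_and] at h2
  tauto

lemma two_mul_measureReal_eq_of_disjoint [IsFiniteMeasure μ] (hf : MeasurePreserving f μ μ)
    (hg : MeasurePreserving g μ μ) (hS : NullMeasurableSet S μ) (hT : NullMeasurableSet T μ)
    (hST : Disjoint S T) (hcovS : ∀ᵐ x ∂μ, x ∈ S ∨ f x ∈ S)
    (hcovT : ∀ᵐ x ∂μ, x ∈ T ∨ g x ∈ T) : 2 * μ.real S = μ.real univ := by
  have hunion := measureReal_union₀ hT hST.aedisjoint (μ := μ)
  have hle_univ := measureReal_mono (subset_univ (S ∪ T)) (μ := μ)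
  linarith [measureReal_univ_le_two_mul hf hS hcovS, measureReal_univ_le_two_mul hg hT hcovT]

lemma preimage_comp_ae_eq_of_disjoint [IsFiniteMeasure μ] (hf : MeasurePreserving f μ μ)
    (hg : MeasurePreserving g μ μ) (hS : NullMeasurableSet S μ) (hT : NullMeasurableSet T μ)
    (hST : Disjoint S T) (hcovS : ∀ᵐ x ∂μ, x ∈ S ∨ f x ∈ S)
    (hcovT : ∀ᵐ x ∂μ, x ∈ T ∨ g x ∈ T) : (g ∘ f) ⁻¹' S =ᵐ[μ] S := by
  have hS_half := two_mul_measureReal_eq_of_disjoint hf hg hS hT hST hcovS hcovT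
  have hT_half := two_mul_measureReal_eq_of_disjoint hg hf hT hS hST.symm hcovT hcovS
  have hS_alt := ae_mem_iff_apply_notMem hf hS hcovS hS_half.le
  have hT_alt := ae_mem_iff_apply_notMem hg hT hcovT hT_half.le
  have hST_cover : ∀ᵐ x ∂μ, x ∈ S ∪ T := by
    refine ae_mem_of_measureReal_eq_univ (hS.union hT) ?_
    rw [measureReal_union₀ hT hST.aedisjoint]
    linarith
  have hST_compl : ∀ᵐ x ∂μ, (x ∈ S ↔ x ∉ T) := by
    filter_upwards [hST_cover] with x hx
    exact ⟨fun h => disjoint_left.1 hST h, hx.resolve_right⟩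
  rw [Filter.eventuallyEq_set]
  filter_upwards [hS_alt, hf.quasiMeasurePreserving.ae hST_compl,
    hf.quasiMeasurePreserving.ae hT_alt, (hg.comp hf).quasiMeasurePreserving.ae hST_compl]
    with x h₁ h₂ h₃ h₄
  simp only [mem_preimage, Function.comp_apply] at h₄ ⊢
  tauto

lemma QuasiErgodic.measureReal_eq_zero_or_univ (hf : QuasiErgodic f μ)
    (hS : NullMeasurableSet S μ) (hfS : f ⁻¹' S =ᵐ[μ] S) :
    μ.real S = 0 ∨ μ.real S = μ.real univ :=
  (hf.ae_empty_or_univ₀ hS hfS).imp (fun h => by simpa using measureReal_congr h)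
    measureReal_congr

lemma ae_mem_or_apply_mem_of_orientation {G : SimpleGraph X} {o : X → X → Prop} {A : Set X}
    (hf : Measure.QuasiMeasurePreserving f μ μ) (hff : ∀ x, f (f x) = x)
    (hadj : ∀ x, G.Adj x (f x)) (hA : ∀ᵐ x ∂μ, x ∈ A)
    (hor : ∀ x ∈ A, ∀ y ∈ A, G.Adj x y → o x y ∨ o y x) :
    ∀ᵐ x ∂μ, x ∈ {x | o x (f x)} ∨ f x ∈ {x | o x (f x)} := by
  filter_upwards [hA, hf.ae hA] with x hx hfx
  simpa only [hff] using hor x hx (f x) hfx (hadj x)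

end

theorem no_measurable_one_orientation_dihedral_general {X : Type*} [MeasurableSpace X]
    (μ : Measure X) [IsProbabilityMeasure μ]
    (a b : X → X)
    (hpa : MeasurePreserving a μ μ) (hpb : MeasurePreserving b μ μ)
    (haa : a ∘ a = id) (hbb : b ∘ b = id)
    (hfree : ∀ x : X, (∀ n : ℕ, n ≠ 0 → (a ∘ b)^[n] x ≠ x) ∧
      (∀ n : ℕ, a ((b ∘ a)^[n] x) ≠ x ∧ b ((a ∘ b)^[n] x) ≠ x))
    (herg : Ergodic (a ∘ b) μ)
    (G : SimpleGraph X) (hG : ∀ x y, G.Adj x y ↔ x ≠ y ∧ (y = a x ∨ y = b x)) :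
    ¬∃ (A : Set X) (o : X → X → Prop),
        MeasurableSet A ∧ μ Aᶜ = 0 ∧
        MeasurableSet {x | o x (a x)} ∧ MeasurableSet {x | o x (b x)} ∧
        (∀ x ∈ A, ∀ y ∈ A, (G.Adj x y ↔ (o x y ∨ o y x))) ∧
        (∀ x, {y | o x y}.encard ≤ 1) := by
  rintro ⟨A, o, -, hAc, hSm, hTm, hor, hout⟩
  have ha : ∀ x, a (a x) = x := congrFun haa
  have hb : ∀ x, b (b x) = x := congrFun hbb
  have hadj_a : ∀ x, G.Adj x (a x) := fun x =>
    (hG x (a x)).2 ⟨(by simpa using ((hfree x).2 0).1 : a x ≠ x).symm, Or.inl rfl⟩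
  have hadj_b : ∀ x, G.Adj x (b x) := fun x =>
    (hG x (b x)).2 ⟨(by simpa using ((hfree x).2 0).2 : b x ≠ x).symm, Or.inr rfl⟩
  have hab : ∀ x, a x ≠ b x := fun x h => (hfree x).1 1 one_ne_zero (by simp [← h, ha])
  have hA : ∀ᵐ x ∂μ, x ∈ A := mem_ae_iff.2 hAc
  have hor' : ∀ x ∈ A, ∀ y ∈ A, G.Adj x y → o x y ∨ o y x := fun x hx y hy => (hor x hx y hy).1
  have hcov_a := ae_mem_or_apply_mem_of_orientation hpa.quasiMeasurePreserving ha hadj_a hA hor'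
  have hcov_b := ae_mem_or_apply_mem_of_orientation hpb.quasiMeasurePreserving hb hadj_b hA hor'
  have hdisj := (disjoint_setOf_of_encard_le_one hout hab).symm
  have hT_half := two_mul_measureReal_eq_of_disjoint hpb hpa hTm.nullMeasurableSet
    hSm.nullMeasurableSet hdisj hcov_b hcov_a
  have hT_inv := preimage_comp_ae_eq_of_disjoint hpb hpa hTm.nullMeasurableSet
    hSm.nullMeasurableSet hdisj hcov_b hcov_a
  rcases herg.quasiErgodic.measureReal_eq_zero_or_univ hTm.nullMeasurableSet hT_inv with h | h <;>
    rw [h, probReal_univ] at hT_half <;> norm_num at hT_half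

/-- The Cayley graph of a free ergodic p.m.p. action of the infinite dihedral
group `⟨a, b : a² = b² = 1⟩` (with `ab` ergodic) admits no measurable
orientation, defined almost everywhere, with all outdegrees at most 1. -/
theorem no_measurable_one_orientation_dihedral {X : Type*} [MeasurableSpace X]
    (μ : Measure X) [IsProbabilityMeasure μ]
    (a b : X → X) (hma : Measurable a) (hmb : Measurable b)
    (hpa : MeasurePreserving a μ μ) (hpb : MeasurePreserving b μ μ)
    (haa : a ∘ a = id) (hbb : b ∘ b = id)
    (hfree : ∀ x : X, (∀ n : ℕ, n ≠ 0 → (a ∘ b)^[n] x ≠ x) ∧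
      (∀ n : ℕ, a ((b ∘ a)^[n] x) ≠ x ∧ b ((a ∘ b)^[n] x) ≠ x))
    (herg : Ergodic (a ∘ b) μ)
    (G : SimpleGraph X) (hG : ∀ x y, G.Adj x y ↔ x ≠ y ∧ (y = a x ∨ y = b x)) :
    ¬∃ (A : Set X) (o : X → X → Prop),
        MeasurableSet A ∧ μ Aᶜ = 0 ∧
        MeasurableSet {x | o x (a x)} ∧ MeasurableSet {x | o x (b x)} ∧
        (∀ x ∈ A, ∀ y ∈ A, (G.Adj x y ↔ (o x y ∨ o y x))) ∧
        (∀ x, {y | o x y}.encard ≤ 1) :=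
  no_measurable_one_orientation_dihedral_general μ a b hpa hpb haa hbb hfree herg G hG
end
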